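/- Let 𝔱 be a finite-dimensional real vector space, Γ ⊂ 𝔱 a discrete subgroup spanning 𝔱, and V ⊂ 𝔱 a linear subspace. The following are equivalent: (b) Γ ∩ V spans V; (c) the image ρ(Γ) under the projection ρ: 𝔱 → 𝔱/V is discrete and spans 𝔱/V; (d) the subgroup V + Γ is closed in 𝔱. -/

import Mathlib

/-
Let ρ : 𝔱 → 𝔱/V be the projection. The set V + Γ is ρ⁻¹(ρΓ), so it is closed iff the countable
subgroup ρΓ is closed in 𝔱/V, and by Baire's theorem a countable closed subgroup is discrete.
Discreteness of ρΓ is a rank count: a discrete subgroup has ℤ-rank equal to the dimension of its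
real span, and rank–nullity for Γ → ρΓ, whose kernel is Γ ∩ V, gives
rank ρΓ + dim span(Γ ∩ V) = dim 𝔱. As ρΓ always spans 𝔱/V, it is discrete iff its rank is
dim 𝔱/V (then a ℤ-basis of ρΓ is an ℝ-basis of 𝔱/V), i.e. iff Γ ∩ V spans V.
-/

open Module Submodule

theorem discreteTopology_of_countable_of_baireSpace {G : Type*} [TopologicalSpace G] [AddGroup G]
    [SeparatelyContinuousAdd G] [T1Space G] [BaireSpace G] [Countable G] :
    DiscreteTopology G := by
  obtain ⟨g, hg⟩ := nonempty_interior_of_iUnion_of_closed (f := fun g : G => ({g} : Set G))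
    (fun _ => isClosed_singleton) (Set.iUnion_of_singleton G)
  have hg_open : IsOpen ({g} : Set G) :=
    hg.subset_singleton_iff.mp interior_subset ▸ isOpen_interior
  apply discreteTopology_of_isOpen_singleton_zero
  simpa using hg_open.preimage (continuous_add_const g)

theorem AddSubgroup.isClosed_iff_discreteTopology {E : Type*} [NormedAddCommGroup E]
    [CompleteSpace E] (H : AddSubgroup E) [Countable H] :
    IsClosed (H : Set E) ↔ DiscreteTopology H :=
  ⟨fun hH => by
    have := hH.completeSpace_coe
    exact discreteTopology_of_countable_of_baireSpace,
   fun _ => H.isClosed_of_discrete⟩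

universe u v w

theorem Submodule.finrank_map_add_finrank_inf_ker {R : Type u} {M : Type v} {N : Type w} [Ring R]
    [HasRankNullity.{v} R] [StrongRankCondition R] [AddCommGroup M] [Module R M] [AddCommGroup N]
    [Module R N] (L : Submodule R M) [Module.Finite R L] (f : M →ₗ[R] N) :
    finrank R (L.map f) + finrank R ↥(L ⊓ LinearMap.ker f) = finrank R L := by
  rw [← LinearMap.range_domRestrict, ← (f.domRestrict L).quotKerEquivRange.finrank_eq,
    ← map_comap_subtype, ← LinearMap.ker_domRestrict,
    ← (L.equivSubtypeMap (LinearMap.ker (f.domRestrict L))).finrank_eq]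
  exact (LinearMap.ker (f.domRestrict L)).finrank_quotient_add_finrank

section DiscreteSubgroup

variable {E : Type*} [NormedAddCommGroup E] [NormedSpace ℝ E]

theorem finrank_int_eq_finrank_span_of_discrete [FiniteDimensional ℝ E] (L : Submodule ℤ E)
    [DiscreteTopology L] :
    finrank ℤ L = finrank ℝ (span ℝ (L : Set E)) := by
  have h := Real.finrank_eq_int_finrank_of_discrete (s := (L : Set E)) (by rwa [span_eq])
  rw [Set.finrank, Set.finrank, span_eq] at h
  exact h.symm

theorem discreteTopology_of_span_eq_top_of_finrank_le (L : Submodule ℤ E) [Module.Finite ℤ L]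
    (hspan : span ℝ (L : Set E) = ⊤) (hrank : finrank ℤ L ≤ finrank ℝ E) :
    DiscreteTopology L := by
  have : IsAddTorsionFree E := IsAddTorsionFree.of_isTorsionFree ℝ E
  have : Module.Free ℤ L := Module.free_of_finite_type_torsion_free'
  let b := Module.finBasis ℤ L
  have hb_span : span ℤ (Set.range fun i => (b i : E)) = L := by
    rw [Set.range_comp', ← L.coe_subtype, ← map_span, b.span_eq, map_subtype_top]
  have hb_top : span ℝ (Set.range fun i => (b i : E)) = ⊤ := by
    rw [← span_span_of_tower ℤ, hb_span, hspan]
  have hcard : Fintype.card (Fin (finrank ℤ L)) = finrank ℝ E := by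
    refine le_antisymm (by simpa using hrank) ?_
    have h := finrank_range_le_card (R := ℝ) fun i => (b i : E)
    rwa [Set.finrank, hb_top, finrank_top] at h
  let bE := basisOfTopLeSpanOfCardEqFinrank _ hb_top.ge hcard
  have hbE : span ℤ (Set.range bE) = L := by
    rw [coe_basisOfTopLeSpanOfCardEqFinrank, hb_span]
  exact hbE ▸ inferInstance

end DiscreteSubgroup

section Quotient

variable {R M : Type*} [Ring R] [AddCommGroup M] [Module R M] (Γ : AddSubgroup M)
  (V : Submodule R M)

theorem span_map_mkQ_eq_top (hspan : span R (Γ : Set M) = ⊤) :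
    span R ((Γ.map V.mkQ.toAddMonoidHom : AddSubgroup (M ⧸ V)) : Set (M ⧸ V)) = ⊤ := by
  rw [AddSubgroup.coe_map, LinearMap.toAddMonoidHom_coe, span_image, hspan, Submodule.map_top,
    range_mkQ]

theorem setOf_add_mem_eq_preimage_mkQ :
    {x : M | ∃ v ∈ V, ∃ γ ∈ Γ, x = v + γ} = V.mkQ ⁻¹' (Γ.map V.mkQ.toAddMonoidHom) := by
  ext x
  simp only [Set.mem_ofPred_eq, Set.mem_preimage, SetLike.mem_coe, AddSubgroup.mem_map,
    LinearMap.toAddMonoidHom_coe, mkQ_apply]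
  constructor
  · rintro ⟨v, hv, γ, hγ, rfl⟩
    refine ⟨γ, hγ, (Submodule.Quotient.eq V).mpr ?_⟩
    simpa using V.neg_mem hv
  · rintro ⟨γ, hγ, h⟩
    refine ⟨x - γ, ?_, γ, hγ, by abel⟩
    simpa using V.neg_mem ((Submodule.Quotient.eq V).mp h)

end Quotient

section Lattice

variable {E : Type*} [NormedAddCommGroup E] [NormedSpace ℝ E] [FiniteDimensional ℝ E]
  {Γ : AddSubgroup E} (V : Submodule ℝ E)

theorem finrank_map_mkQ_add_finrank_span_inter (hdisc : DiscreteTopology Γ)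
    (hspan : span ℝ (Γ : Set E) = ⊤) :
    finrank ℤ (Γ.map V.mkQ.toAddMonoidHom) + finrank ℝ (span ℝ ((Γ : Set E) ∩ V)) =
      finrank ℝ E := by
  let Λ := Γ.toIntSubmodule
  have : DiscreteTopology Λ := hdisc
  have : IsZLattice ℝ Λ := ⟨hspan⟩
  have : DiscreteTopology ↥(Λ ⊓ V.restrictScalars ℤ) :=
    DiscreteTopology.of_continuous_injective (f := inclusion inf_le_left)
      (continuous_inclusion inf_le_left) (inclusion_injective _)
  have h := Λ.finrank_map_add_finrank_inf_ker (V.mkQ.restrictScalars ℤ)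
  rw [LinearMap.ker_restrictScalars, ker_mkQ, finrank_int_eq_finrank_span_of_discrete (Λ ⊓ _),
    ZLattice.rank ℝ Λ] at h
  exact h

theorem isClosed_setOf_add_mem_iff_discreteTopology (hdisc : DiscreteTopology Γ)
    (hspan : span ℝ (Γ : Set E) = ⊤) :
    IsClosed {x : E | ∃ v ∈ V, ∃ γ ∈ Γ, x = v + γ} ↔
      DiscreteTopology (Γ.map V.mkQ.toAddMonoidHom) := by
  have : IsClosed (V : Set E) := V.closed_of_finiteDimensional -- the norm on `E ⧸ V` needs it
  have : DiscreteTopology Γ.toIntSubmodule := hdisc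
  have : IsZLattice ℝ Γ.toIntSubmodule := ⟨hspan⟩
  have : Countable Γ := instCountable_of_discrete_submodule Γ.toIntSubmodule
  have : Countable (Γ.map V.mkQ.toAddMonoidHom) :=
    (V.mkQ.toAddMonoidHom.addSubgroupMap_surjective Γ).countable
  rw [setOf_add_mem_eq_preimage_mkQ, (isQuotientMap_mkQ V).isClosed_preimage]
  exact AddSubgroup.isClosed_iff_discreteTopology _

theorem discreteTopology_map_mkQ_iff_span_inter_eq (hdisc : DiscreteTopology Γ)
    (hspan : span ℝ (Γ : Set E) = ⊤) :
    DiscreteTopology (Γ.map V.mkQ.toAddMonoidHom) ↔ span ℝ ((Γ : Set E) ∩ V) = V := by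
  have : IsClosed (V : Set E) := V.closed_of_finiteDimensional -- the norm on `E ⧸ V` needs it
  have hrank := finrank_map_mkQ_add_finrank_span_inter V hdisc hspan
  have hquot := V.finrank_quotient_add_finrank
  have hspan_quot := span_map_mkQ_eq_top Γ V hspan
  let G := (Γ.map V.mkQ.toAddMonoidHom).toIntSubmodule
  change finrank ℤ G + _ = _ at hrank
  constructor
  · intro (_ : DiscreteTopology G)
    have hG_rank := finrank_int_eq_finrank_span_of_discrete G
    rw [AddSubgroup.coe_toIntSubmodule, hspan_quot, finrank_top] at hG_rank
    refine eq_of_le_of_finrank_le (span_le.mpr Set.inter_subset_right) ?_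
    omega
  · intro hb
    rw [hb] at hrank
    have : DiscreteTopology Γ.toIntSubmodule := hdisc
    have : Module.Finite ℤ G := Module.Finite.map Γ.toIntSubmodule (V.mkQ.restrictScalars ℤ)
    exact discreteTopology_of_span_eq_top_of_finrank_le G hspan_quot (by omega)

end Lattice

theorem stmt14 {𝔱 : Type*} [NormedAddCommGroup 𝔱] [NormedSpace ℝ 𝔱]
    [FiniteDimensional ℝ 𝔱]
    (Γ : AddSubgroup 𝔱) (hdisc : DiscreteTopology Γ)
    (hspan : Submodule.span ℝ (Γ : Set 𝔱) = ⊤)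
    (V : Submodule ℝ 𝔱) :
    -- (b) ↔ (d)
    ((Submodule.span ℝ ((Γ : Set 𝔱) ∩ (V : Set 𝔱)) = V) ↔
      IsClosed {x : 𝔱 | ∃ v ∈ V, ∃ γ ∈ Γ, x = v + γ}) ∧
    -- (c) ↔ (d)
    (((DiscreteTopology (Γ.map V.mkQ.toAddMonoidHom)) ∧
      Submodule.span ℝ ((Γ.map V.mkQ.toAddMonoidHom : AddSubgroup (𝔱 ⧸ V)) :
        Set (𝔱 ⧸ V)) = ⊤) ↔
      IsClosed {x : 𝔱 | ∃ v ∈ V, ∃ γ ∈ Γ, x = v + γ}) := by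
  have hclosed := isClosed_setOf_add_mem_iff_discreteTopology V hdisc hspan
  have hdisc_quot := discreteTopology_map_mkQ_iff_span_inter_eq V hdisc hspan
  refine ⟨hdisc_quot.symm.trans hclosed.symm, fun h => hclosed.mpr h.1, fun h => ?_⟩
  exact ⟨hclosed.mp h, span_map_mkQ_eq_top Γ V hspan⟩
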